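/- In a triple vector bundle E, if e, e' ∈ E have exactly the same outline (the same projections to all lower faces and edges), then there exists a unique ultracore element u ∈ E_{123} such that e -_{1,3} e' = 0̂_{e_{1,3}} +_{1,2} (0̂_{e_1} +_{2,3} u) = 0̂_{e_{1,3}} +_{2,3} (0̂_{e_3} +_{1,2} u), and the analogous formulas hold for e -_{1,2} e' and e -_{2,3} e' with the same u. -/

import Mathlib

/-! Algebraic model of (double) vector bundles.

A `PreVB E B` is a vector bundle structure on `E` over the base `B`, recorded
through its structure maps (projection, fibrewise addition, scalar
multiplication by reals, zero section and fibrewise negation) together with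
the usual axioms, all stated for elements lying in a common fibre. -/

structure PreVB (E : Type*) (B : Type*) where
  π : E → B
  add : E → E → E
  smul : ℝ → E → E
  neg : E → E
  zero : B → E
  π_zero : ∀ b, π (zero b) = b
  π_add : ∀ e e', π e = π e' → π (add e e') = π e
  π_smul : ∀ t e, π (smul t e) = π e
  π_neg : ∀ e, π (neg e) = π e
  add_zero : ∀ e, add e (zero (π e)) = e
  zero_add : ∀ e, add (zero (π e)) e = e
  add_comm : ∀ e e', π e = π e' → add e e' = add e' e
  add_assoc : ∀ e₁ e₂ e₃, π e₁ = π e₂ → π e₂ = π e₃ →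
    add (add e₁ e₂) e₃ = add e₁ (add e₂ e₃)
  add_neg : ∀ e, add e (neg e) = zero (π e)
  one_smul : ∀ e, smul 1 e = e
  smul_zero : ∀ t b, smul t (zero b) = zero b
  smul_add : ∀ t e e', π e = π e' → smul t (add e e') = add (smul t e) (smul t e')
  add_smul : ∀ t s e, smul (t + s) e = add (smul t e) (smul s e)
  mul_smul : ∀ t s e, smul (t * s) e = smul t (smul s e)

/-- Fibrewise subtraction. -/
def PreVB.sub {E B : Type*} (V : PreVB E B) (e e' : E) : E := V.add e (V.neg e')

/-- An (algebraic model of a) double vector bundle `(D; A, B; M)`: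
two vector bundle structures on `D`, over the vector bundles `A → M` and
`B → M`, which commute in the categorical sense: each structure map of either
structure on `D` is a morphism of vector bundles with respect to the other
structure.  The field `core_exists` records that the core acts freely and
transitively on the fibres of `D → A ×_M B` (it follows, for genuine double
vector bundles, from `D → A ×_M B` being a surjective submersion). -/
structure DVB (D : Type*) (A : Type*) (B : Type*) (M : Type*) where
  bA : PreVB A M
  bB : PreVB B M
  vA : PreVB D A
  vB : PreVB D B
  proj_compat : ∀ d, bA.π (vA.π d) = bB.π (vB.π d)
  πB_addA : ∀ d d', vA.π d = vA.π d' → vB.π (vA.add d d') = bB.add (vB.π d) (vB.π d')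
  πA_addB : ∀ d d', vB.π d = vB.π d' → vA.π (vB.add d d') = bA.add (vA.π d) (vA.π d')
  πB_smulA : ∀ t d, vB.π (vA.smul t d) = bB.smul t (vB.π d)
  πA_smulB : ∀ t d, vA.π (vB.smul t d) = bA.smul t (vA.π d)
  πB_negA : ∀ d, vB.π (vA.neg d) = bB.neg (vB.π d)
  πA_negB : ∀ d, vA.π (vB.neg d) = bA.neg (vA.π d)
  πB_zeroA : ∀ a, vB.π (vA.zero a) = bB.zero (bA.π a)
  πA_zeroB : ∀ b, vA.π (vB.zero b) = bA.zero (bB.π b)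
  zeroA_add : ∀ a a', bA.π a = bA.π a' →
    vA.zero (bA.add a a') = vB.add (vA.zero a) (vA.zero a')
  zeroB_add : ∀ b b', bB.π b = bB.π b' →
    vB.zero (bB.add b b') = vA.add (vB.zero b) (vB.zero b')
  zeroA_smul : ∀ t a, vA.zero (bA.smul t a) = vB.smul t (vA.zero a)
  zeroB_smul : ∀ t b, vB.zero (bB.smul t b) = vA.smul t (vB.zero b)
  double_zero : ∀ m, vA.zero (bA.zero m) = vB.zero (bB.zero m)
  interchange : ∀ d₁ d₂ d₃ d₄,
    vA.π d₁ = vA.π d₂ → vA.π d₃ = vA.π d₄ →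
    vB.π d₁ = vB.π d₃ → vB.π d₂ = vB.π d₄ →
    vB.add (vA.add d₁ d₂) (vA.add d₃ d₄) = vA.add (vB.add d₁ d₃) (vB.add d₂ d₄)
  smulA_addB : ∀ t d d', vB.π d = vB.π d' →
    vA.smul t (vB.add d d') = vB.add (vA.smul t d) (vA.smul t d')
  smulB_addA : ∀ t d d', vA.π d = vA.π d' →
    vB.smul t (vA.add d d') = vA.add (vB.smul t d) (vB.smul t d')
  smul_smul : ∀ t s d, vA.smul t (vB.smul s d) = vB.smul s (vA.smul t d)
  core_exists : ∀ d d', vA.π d = vA.π d' → vB.π d = vB.π d' →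
    ∃! c : D, (vA.π c = bA.zero (bA.π (vA.π d)) ∧ vB.π c = bB.zero (bA.π (vA.π d))) ∧
      d = vA.add d' (vB.add c (vA.zero (vA.π d)))

/-- `d` is an element of the core of the double vector bundle, sitting over `m ∈ M`. -/
def DVB.CoreAt {D A B M : Type*} (V : DVB D A B M) (m : M) (d : D) : Prop :=
  V.vA.π d = V.bA.zero m ∧ V.vB.π d = V.bB.zero m

/-- A linear section `(ξ, X)` of the double vector bundle: `ξ : B → D` is a
section of `D → B` which is a morphism of vector bundles over `X : M → A`. -/
structure LinSecB {D A B M : Type*} (V : DVB D A B M) where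
  ξ : B → D
  X : M → A
  secX : ∀ m, V.bA.π (X m) = m
  proj : ∀ b, V.vB.π (ξ b) = b
  overX : ∀ b, V.vA.π (ξ b) = X (V.bB.π b)
  map_add : ∀ b b', V.bB.π b = V.bB.π b' →
    ξ (V.bB.add b b') = V.vA.add (ξ b) (ξ b')
  map_smul : ∀ t b, ξ (V.bB.smul t b) = V.vA.smul t (ξ b)

/-- A linear section `(η, Y)` of the other structure: `η : A → D` is a section
of `D → A` which is a morphism of vector bundles over `Y : M → B`. -/
structure LinSecA {D A B M : Type*} (V : DVB D A B M) where
  η : A → D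
  Y : M → B
  secY : ∀ m, V.bB.π (Y m) = m
  proj : ∀ a, V.vA.π (η a) = a
  overY : ∀ a, V.vB.π (η a) = Y (V.bA.π a)
  map_add : ∀ a a', V.bA.π a = V.bA.π a' →
    η (V.bA.add a a') = V.vB.add (η a) (η a')
  map_smul : ∀ t a, η (V.bA.smul t a) = V.vB.smul t (η a)

/-- `w : M → D` is (the core-valued function underlying) the warp of the grid
`((ξ, X), (η, Y))`:  pointwise it is a core element and satisfies
`ξ(Y(m)) -_A η(X(m)) = w(m) +_B 0̃_{X(m)}` and
`ξ(Y(m)) -_B η(X(m)) = w(m) +_A 0̃_{Y(m)}`. -/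
def DVB.IsWarp {D A B M : Type*} (V : DVB D A B M)
    (s : LinSecB V) (r : LinSecA V) (w : M → D) : Prop :=
  ∀ m : M, V.CoreAt m (w m) ∧
    V.vA.sub (s.ξ (r.Y m)) (r.η (s.X m)) = V.vB.add (w m) (V.vA.zero (s.X m)) ∧
    V.vB.sub (s.ξ (r.Y m)) (r.η (s.X m)) = V.vA.add (w m) (V.vB.zero (r.Y m))

/-! Algebraic model of triple vector bundles.

A triple vector bundle is a cube of vector bundle structures whose six faces
are double vector bundles; the structures shared between adjacent faces
coincide.  We record the six faces (with the intended identifications: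
`up : (E; E₁₃, E₂₃; E₃)`, `back : (E; E₁₂, E₁₃; E₁)`, `left : (E; E₁₂, E₂₃; E₂)`,
`down : (E₁₂; E₁, E₂; M)`, `right : (E₁₃; E₁, E₃; M)`, `front : (E₂₃; E₂, E₃; M)`)
together with the coherence conditions saying that the same bundle structure
is used whenever two faces share an edge, and that the iterated zero sections
over `E₁`, `E₂`, `E₃` agree. -/
structure TVB (E E12 E13 E23 E1 E2 E3 M : Type*) where
  up : DVB E E13 E23 E3
  back : DVB E E12 E13 E1
  left : DVB E E12 E23 E2
  down : DVB E12 E1 E2 M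
  right : DVB E13 E1 E3 M
  front : DVB E23 E2 E3 M
  coh_E_E12 : back.vA = left.vA
  coh_E_E13 : up.vA = back.vB
  coh_E_E23 : up.vB = left.vB
  coh_E12_E1 : back.bA = down.vA
  coh_E12_E2 : left.bA = down.vB
  coh_E13_E1 : back.bB = right.vA
  coh_E13_E3 : up.bA = right.vB
  coh_E23_E2 : left.bB = front.vA
  coh_E23_E3 : up.bB = front.vB
  coh_E1_M : down.bA = right.bA
  coh_E2_M : down.bB = front.bA
  coh_E3_M : right.bB = front.bB
  zero_coh_E1 : ∀ e1 : E1, back.vA.zero (down.vA.zero e1) = up.vA.zero (right.vA.zero e1)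
  zero_coh_E2 : ∀ e2 : E2, back.vA.zero (down.vB.zero e2) = up.vB.zero (front.vA.zero e2)
  zero_coh_E3 : ∀ e3 : E3, up.vA.zero (right.vB.zero e3) = up.vB.zero (front.vB.zero e3)

namespace TVB

variable {E E12 E13 E23 E1 E2 E3 M : Type*}

/-- The double zero `0̂_{e₁}` of `E` over `e₁ ∈ E₁`. -/
def zE1 (T : TVB E E12 E13 E23 E1 E2 E3 M) (e1 : E1) : E :=
  T.back.vA.zero (T.down.vA.zero e1)

/-- The double zero `0̂_{e₂}` of `E` over `e₂ ∈ E₂`. -/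
def zE2 (T : TVB E E12 E13 E23 E1 E2 E3 M) (e2 : E2) : E :=
  T.back.vA.zero (T.down.vB.zero e2)

/-- The double zero `0̂_{e₃}` of `E` over `e₃ ∈ E₃`. -/
def zE3 (T : TVB E E12 E13 E23 E1 E2 E3 M) (e3 : E3) : E :=
  T.up.vA.zero (T.right.vB.zero e3)

/-- The triple zero `⊙³_m` of `E` over `m ∈ M`. -/
def tripleZero (T : TVB E E12 E13 E23 E1 E2 E3 M) (m : M) : E :=
  T.up.vB.zero (T.front.vA.zero (T.front.bA.zero m))

/-- `e` belongs to the ultracore of `E`, over `m ∈ M`: all three projections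
of `e` are (double) zeros. -/
def UltracoreAt (T : TVB E E12 E13 E23 E1 E2 E3 M) (m : M) (e : E) : Prop :=
  T.back.vA.π e = T.down.vA.zero (T.down.bA.zero m) ∧
  T.up.vA.π e = T.right.vA.zero (T.right.bA.zero m) ∧
  T.up.vB.π e = T.front.vA.zero (T.front.bA.zero m)

end TVB

/-- A down-up linear double section `(Z_{1,2}; Z_1, Z_2; Z)` of a triple vector
bundle: a morphism of double vector bundles from the Down face to the Up
face. -/
structure DULinSec {E E12 E13 E23 E1 E2 E3 M : Type*}
    (T : TVB E E12 E13 E23 E1 E2 E3 M) where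
  z12 : E12 → E
  z1 : E1 → E13
  z2 : E2 → E23
  z : M → E3
  sec12 : ∀ p, T.back.vA.π (z12 p) = p
  over13 : ∀ p, T.up.vA.π (z12 p) = z1 (T.down.vA.π p)
  over23 : ∀ p, T.up.vB.π (z12 p) = z2 (T.down.vB.π p)
  sec1 : ∀ p, T.right.vA.π (z1 p) = p
  over1 : ∀ p, T.right.vB.π (z1 p) = z (T.right.bA.π p)
  sec2 : ∀ p, T.front.vA.π (z2 p) = p
  over2 : ∀ p, T.front.vB.π (z2 p) = z (T.front.bA.π p)
  secz : ∀ m, T.right.bB.π (z m) = m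
  map_add1 : ∀ p q, T.down.vA.π p = T.down.vA.π q →
    z12 (T.down.vA.add p q) = T.up.vA.add (z12 p) (z12 q)
  map_add2 : ∀ p q, T.down.vB.π p = T.down.vB.π q →
    z12 (T.down.vB.add p q) = T.up.vB.add (z12 p) (z12 q)
  map_smul1 : ∀ t p, z12 (T.down.vA.smul t p) = T.up.vA.smul t (z12 p)
  map_smul2 : ∀ t p, z12 (T.down.vB.smul t p) = T.up.vB.smul t (z12 p)
  z1_add : ∀ p q, T.right.bA.π p = T.right.bA.π q →
    z1 (T.right.bA.add p q) = T.right.vB.add (z1 p) (z1 q)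
  z1_smul : ∀ t p, z1 (T.right.bA.smul t p) = T.right.vB.smul t (z1 p)
  z2_add : ∀ p q, T.front.bA.π p = T.front.bA.π q →
    z2 (T.front.bA.add p q) = T.front.vB.add (z2 p) (z2 q)
  z2_smul : ∀ t p, z2 (T.front.bA.smul t p) = T.front.vB.smul t (z2 p)

/-- A front-back linear double section `(X_{2,3}; X_2, X_3; X)`. -/
structure FBLinSec {E E12 E13 E23 E1 E2 E3 M : Type*}
    (T : TVB E E12 E13 E23 E1 E2 E3 M) where
  x23 : E23 → E
  x2 : E2 → E12
  x3 : E3 → E13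
  x : M → E1
  sec23 : ∀ p, T.up.vB.π (x23 p) = p
  over12 : ∀ p, T.back.vA.π (x23 p) = x2 (T.front.vA.π p)
  over13 : ∀ p, T.up.vA.π (x23 p) = x3 (T.front.vB.π p)
  sec2 : ∀ p, T.down.vB.π (x2 p) = p
  over2 : ∀ p, T.down.vA.π (x2 p) = x (T.down.bB.π p)
  sec3 : ∀ p, T.right.vB.π (x3 p) = p
  over3 : ∀ p, T.right.vA.π (x3 p) = x (T.right.bB.π p)
  secx : ∀ m, T.down.bA.π (x m) = m
  map_add2 : ∀ p q, T.front.vA.π p = T.front.vA.π q →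
    x23 (T.front.vA.add p q) = T.back.vA.add (x23 p) (x23 q)
  map_add3 : ∀ p q, T.front.vB.π p = T.front.vB.π q →
    x23 (T.front.vB.add p q) = T.up.vA.add (x23 p) (x23 q)
  map_smul2 : ∀ t p, x23 (T.front.vA.smul t p) = T.back.vA.smul t (x23 p)
  map_smul3 : ∀ t p, x23 (T.front.vB.smul t p) = T.up.vA.smul t (x23 p)
  x2_add : ∀ p q, T.down.bB.π p = T.down.bB.π q →
    x2 (T.down.bB.add p q) = T.down.vA.add (x2 p) (x2 q)
  x2_smul : ∀ t p, x2 (T.down.bB.smul t p) = T.down.vA.smul t (x2 p)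
  x3_add : ∀ p q, T.right.bB.π p = T.right.bB.π q →
    x3 (T.right.bB.add p q) = T.right.vA.add (x3 p) (x3 q)
  x3_smul : ∀ t p, x3 (T.right.bB.smul t p) = T.right.vA.smul t (x3 p)

/-- A right-left linear double section `(Y_{1,3}; Y_1, Y_3; Y)`. -/
structure RLLinSec {E E12 E13 E23 E1 E2 E3 M : Type*}
    (T : TVB E E12 E13 E23 E1 E2 E3 M) where
  y13 : E13 → E
  y1 : E1 → E12
  y3 : E3 → E23
  y : M → E2
  sec13 : ∀ p, T.up.vA.π (y13 p) = p
  over12 : ∀ p, T.back.vA.π (y13 p) = y1 (T.right.vA.π p)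
  over23 : ∀ p, T.up.vB.π (y13 p) = y3 (T.right.vB.π p)
  sec1 : ∀ p, T.down.vA.π (y1 p) = p
  over1 : ∀ p, T.down.vB.π (y1 p) = y (T.down.bA.π p)
  sec3 : ∀ p, T.front.vB.π (y3 p) = p
  over3 : ∀ p, T.front.vA.π (y3 p) = y (T.front.bB.π p)
  secy : ∀ m, T.down.bB.π (y m) = m
  map_add1 : ∀ p q, T.right.vA.π p = T.right.vA.π q →
    y13 (T.right.vA.add p q) = T.back.vA.add (y13 p) (y13 q)
  map_add3 : ∀ p q, T.right.vB.π p = T.right.vB.π q →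
    y13 (T.right.vB.add p q) = T.up.vB.add (y13 p) (y13 q)
  map_smul1 : ∀ t p, y13 (T.right.vA.smul t p) = T.back.vA.smul t (y13 p)
  map_smul3 : ∀ t p, y13 (T.right.vB.smul t p) = T.up.vB.smul t (y13 p)
  y1_add : ∀ p q, T.down.bA.π p = T.down.bA.π q →
    y1 (T.down.bA.add p q) = T.down.vB.add (y1 p) (y1 q)
  y1_smul : ∀ t p, y1 (T.down.bA.smul t p) = T.down.vB.smul t (y1 p)
  y3_add : ∀ p q, T.front.bB.π p = T.front.bB.π q →
    y3 (T.front.bB.add p q) = T.front.vA.add (y3 p) (y3 q)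
  y3_smul : ∀ t p, y3 (T.front.bB.smul t p) = T.front.vA.smul t (y3 p)

/-! Since `e` and `e'` have the same outline, `d := e -_{1,3} e'` lies over zeros of `E_{1,2}`
and `E_{2,3}`. Subtracting `0̂_{e_{1,3}}` from `d` with `-_{1,2}` leaves a core element of the
Back face, and subtracting `0̂_{e_1}` from that with `-_{2,3}` leaves an ultracore element `u`;
this gives the first formula. The others come from one fact about a double vector bundle,
applied in the Up, Back and Left faces: for a core element `c`, the interchange law with two zero
entries gives `d +_A (0̃_{π_A d} +_B c) = d +_B (0̃_{π_B d} +_A c)`. Uniqueness is cancellation.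

In the code `+_{1,2}`, `+_{1,3}`, `+_{2,3}` are `back.vA`, `up.vA`, `up.vB`. -/

namespace PreVB

variable {E B : Type*} (V : PreVB E B)

theorem π_sub {a b : E} (h : V.π a = V.π b) : V.π (V.sub a b) = V.π a :=
  V.π_add a (V.neg b) (by rw [V.π_neg, h])

theorem add_zero_of_π_eq {a : E} {b : B} (h : V.π a = b) : V.add a (V.zero b) = a :=
  h ▸ V.add_zero a

theorem sub_self (a : E) : V.sub a a = V.zero (V.π a) :=
  V.add_neg a

theorem neg_add (a : E) : V.add (V.neg a) a = V.zero (V.π a) := by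
  rw [V.add_comm _ _ (V.π_neg a), V.add_neg]

theorem add_sub_cancel {a b : E} (h : V.π a = V.π b) : V.add a (V.sub b a) = b := by
  have hn : V.π b = V.π (V.neg a) := by rw [V.π_neg, h]
  rw [sub, V.add_comm a _ (by rw [V.π_add _ _ hn, h]), V.add_assoc _ _ _ hn (V.π_neg a),
    V.neg_add, V.add_zero_of_π_eq h.symm]

theorem add_sub_cancel_left {a b : E} (h : V.π b = V.π a) : V.sub (V.add a b) a = b := by
  rw [sub, V.add_comm a b h.symm, V.add_assoc _ _ _ h (V.π_neg a).symm, V.add_neg,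
    V.add_zero_of_π_eq h]

theorem sub_eq_iff_eq_add {a b c : E} (hab : V.π a = V.π b) (hcb : V.π c = V.π b) :
    V.sub a b = c ↔ a = V.add b c :=
  ⟨fun h => h ▸ (V.add_sub_cancel hab.symm).symm, fun h => h ▸ V.add_sub_cancel_left hcb⟩

theorem add_left_cancel {a b c : E} (hb : V.π b = V.π a) (hc : V.π c = V.π a)
    (h : V.add a b = V.add a c) : b = c := by
  rw [← V.add_sub_cancel_left hb, h, V.add_sub_cancel_left hc]

end PreVB

namespace DVB

variable {D A B M : Type*} (V : DVB D A B M)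

theorem πA_subB {d d' : D} (h : V.vB.π d = V.vB.π d') :
    V.vA.π (V.vB.sub d d') = V.bA.sub (V.vA.π d) (V.vA.π d') := by
  rw [PreVB.sub, V.πA_addB _ _ (by rw [V.vB.π_neg, h]), V.πA_negB, PreVB.sub]

theorem πB_subA {d d' : D} (h : V.vA.π d = V.vA.π d') :
    V.vB.π (V.vA.sub d d') = V.bB.sub (V.vB.π d) (V.vB.π d') := by
  rw [PreVB.sub, V.πB_addA _ _ (by rw [V.vA.π_neg, h]), V.πB_negA, PreVB.sub]

theorem πA_zeroB_πB (d : D) :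
    V.vA.π (V.vB.zero (V.vB.π d)) = V.bA.zero (V.bA.π (V.vA.π d)) := by
  rw [V.πA_zeroB, V.proj_compat]

theorem πA_addB_zeroA_core {a : A} {x : D} (hx : V.CoreAt (V.bA.π a) x) :
    V.vA.π (V.vB.add (V.vA.zero a) x) = a := by
  rw [V.πA_addB _ _ (by rw [V.πB_zeroA, hx.2]), V.vA.π_zero, hx.1, V.bA.add_zero]

theorem πB_addA_zeroB_core {b : B} {x : D} (hx : V.CoreAt (V.bB.π b) x) :
    V.vB.π (V.vA.add (V.vB.zero b) x) = b := by
  rw [V.πB_addA _ _ (by rw [V.πA_zeroB, hx.1]), V.vB.π_zero, hx.2, V.bB.add_zero]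

theorem addA_zero_addB_eq_addB_zero_addA {d x : D} (hx : V.CoreAt (V.bA.π (V.vA.π d)) x) :
    V.vA.add d (V.vB.add (V.vA.zero (V.vA.π d)) x) =
      V.vB.add d (V.vA.add (V.vB.zero (V.vB.π d)) x) := by
  have h := V.interchange d (V.vA.zero (V.vA.π d)) (V.vB.zero (V.vB.π d)) x
    (V.vA.π_zero _).symm (by rw [V.πA_zeroB_πB, hx.1]) (V.vB.π_zero _).symm
    (by rw [V.πB_zeroA, hx.2])
  rwa [V.vA.add_zero, V.vB.add_zero, eq_comm] at h

theorem subA_eq_iff_subB_eq {e e' x : D} (hA : V.vA.π e = V.vA.π e') (hB : V.vB.π e = V.vB.π e')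
    (hx : V.CoreAt (V.bA.π (V.vA.π e)) x) :
    V.vA.sub e e' = V.vB.add (V.vA.zero (V.vA.π e)) x ↔
      V.vB.sub e e' = V.vA.add (V.vB.zero (V.vB.π e)) x := by
  have hxB : V.CoreAt (V.bB.π (V.vB.π e)) x := by rwa [← V.proj_compat]
  rw [V.vA.sub_eq_iff_eq_add hA (by rw [V.πA_addB_zeroA_core hx, hA]),
    V.vB.sub_eq_iff_eq_add hB (by rw [V.πB_addA_zeroB_core hxB, hB]), hA, hB,
    V.addA_zero_addB_eq_addB_zero_addA (by rwa [← hA])]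

theorem addA_zero_addB_core_injective {d x y : D} (hx : V.CoreAt (V.bA.π (V.vA.π d)) x)
    (hy : V.CoreAt (V.bA.π (V.vA.π d)) y)
    (h : V.vA.add d (V.vB.add (V.vA.zero (V.vA.π d)) x) =
      V.vA.add d (V.vB.add (V.vA.zero (V.vA.π d)) y)) : x = y :=
  V.vB.add_left_cancel (by rw [hx.2, V.πB_zeroA]) (by rw [hy.2, V.πB_zeroA])
    (V.vA.add_left_cancel (V.πA_addB_zeroA_core hx) (V.πA_addB_zeroA_core hy) h)

theorem coreAt_subA_zeroB {d : D} {m : M} (h : V.vA.π d = V.bA.zero m) :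
    V.CoreAt m (V.vA.sub d (V.vB.zero (V.vB.π d))) := by
  have hz : V.vA.π d = V.vA.π (V.vB.zero (V.vB.π d)) := by
    rw [V.πA_zeroB_πB, h, V.bA.π_zero]
  refine ⟨by rw [V.vA.π_sub hz, h], ?_⟩
  rw [V.πB_subA hz, V.vB.π_zero, PreVB.sub_self, ← V.proj_compat, h, V.bA.π_zero]

end DVB

namespace TVB

variable {E E12 E13 E23 E1 E2 E3 M : Type*} (T : TVB E E12 E13 E23 E1 E2 E3 M)

theorem π1_π13 (e : E) : T.right.vA.π (T.up.vA.π e) = T.down.vA.π (T.back.vA.π e) := by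
  have h := T.back.proj_compat e
  rw [T.coh_E12_E1, T.coh_E13_E1, ← T.coh_E_E13] at h
  exact h.symm

theorem π2_π23 (e : E) : T.front.vA.π (T.up.vB.π e) = T.down.vB.π (T.back.vA.π e) := by
  have h := T.left.proj_compat e
  rw [T.coh_E12_E2, T.coh_E23_E2, ← T.coh_E_E12, ← T.coh_E_E23] at h
  exact h.symm

theorem π3_π23 (e : E) : T.front.vB.π (T.up.vB.π e) = T.right.vB.π (T.up.vA.π e) := by
  have h := T.up.proj_compat e
  rw [T.coh_E13_E3, T.coh_E23_E3] at h
  exact h.symm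

theorem πM_π3_π13 (e : E) :
    T.right.bB.π (T.right.vB.π (T.up.vA.π e)) =
      T.down.bA.π (T.down.vA.π (T.back.vA.π e)) := by
  rw [← T.right.proj_compat, T.π1_π13, T.coh_E1_M]

theorem π12_zero13 (e : E) :
    T.back.vA.π (T.up.vA.zero (T.up.vA.π e)) =
      T.down.vA.zero (T.down.vA.π (T.back.vA.π e)) := by
  have h := T.back.πA_zeroB (T.up.vA.π e)
  rwa [← T.coh_E_E13, T.coh_E12_E1, T.coh_E13_E1, T.π1_π13] at h

theorem π23_zero13 (a : E13) :
    T.up.vB.π (T.up.vA.zero a) = T.front.vB.zero (T.right.vB.π a) := by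
  have h := T.up.πB_zeroA a
  rwa [T.coh_E23_E3, T.coh_E13_E3] at h

theorem π13_zero12 (a : E12) :
    T.up.vA.π (T.back.vA.zero a) = T.right.vA.zero (T.down.vA.π a) := by
  have h := T.back.πB_zeroA a
  rwa [← T.coh_E_E13, T.coh_E13_E1, T.coh_E12_E1] at h

theorem π23_zero12 (a : E12) :
    T.up.vB.π (T.back.vA.zero a) = T.front.vA.zero (T.down.vB.π a) := by
  have h := T.left.πB_zeroA a
  rwa [← T.coh_E_E23, ← T.coh_E_E12, T.coh_E23_E2, T.coh_E12_E2] at h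

theorem π12_zero23 (e : E) :
    T.back.vA.π (T.up.vB.zero (T.up.vB.π e)) =
      T.down.vB.zero (T.down.vB.π (T.back.vA.π e)) := by
  have h := T.left.πA_zeroB (T.up.vB.π e)
  rwa [← T.coh_E_E23, ← T.coh_E_E12, T.coh_E23_E2, T.coh_E12_E2, T.π2_π23] at h

theorem π13_zero23 (e : E) :
    T.up.vA.π (T.up.vB.zero (T.up.vB.π e)) = T.right.vB.zero (T.right.vB.π (T.up.vA.π e)) := by
  have h := T.up.πA_zeroB (T.up.vB.π e)
  rwa [T.coh_E23_E3, T.coh_E13_E3, T.π3_π23] at h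

variable {T}

theorem UltracoreAt.coreAt_back {m : M} {u : E} (hu : T.UltracoreAt m u) :
    T.back.CoreAt (T.down.bA.zero m) u := by
  refine ⟨by rw [T.coh_E12_E1, hu.1], ?_⟩
  rw [← T.coh_E_E13, T.coh_E13_E1, hu.2.1, T.coh_E1_M]

theorem UltracoreAt.coreAt_left {m : M} {u : E} (hu : T.UltracoreAt m u) :
    T.left.CoreAt (T.down.bB.zero m) u := by
  refine ⟨by rw [← T.coh_E_E12, T.coh_E12_E2, hu.1, T.down.double_zero], ?_⟩
  rw [← T.coh_E_E23, T.coh_E23_E2, hu.2.2, T.coh_E2_M]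

theorem UltracoreAt.coreAt_up {m : M} {u : E} (hu : T.UltracoreAt m u) :
    T.up.CoreAt (T.right.bB.zero m) u := by
  refine ⟨by rw [T.coh_E13_E3, hu.2.1, T.right.double_zero], ?_⟩
  rw [T.coh_E23_E3, hu.2.2, T.front.double_zero, T.coh_E3_M]

theorem UltracoreAt.coreAt_left_zero13 {e u : E}
    (hu : T.UltracoreAt (T.down.bA.π (T.down.vA.π (T.back.vA.π e))) u) :
    T.left.CoreAt (T.left.bA.π (T.left.vA.π (T.up.vA.zero (T.up.vA.π e)))) u := by
  rw [← T.coh_E_E12, T.π12_zero13, T.coh_E12_E2, T.down.πB_zeroA]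
  exact hu.coreAt_left

theorem coreAt_back_zE1_add23 {e1 : E1} {u : E} (hu : T.UltracoreAt (T.down.bA.π e1) u) :
    T.back.CoreAt e1 (T.up.vB.add (T.zE1 e1) u) := by
  have h12 := T.left.πA_addB_zeroA_core (a := T.down.vA.zero e1) (x := u)
    (by rw [T.coh_E12_E2, T.down.πB_zeroA]; exact hu.coreAt_left)
  have h13 := T.up.πA_addB_zeroA_core (a := T.right.vA.zero e1) (x := u)
    (by rw [T.coh_E13_E3, T.right.πB_zeroA, ← T.coh_E1_M]; exact hu.coreAt_up)
  rw [← T.coh_E_E12, ← T.coh_E_E23] at h12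
  rw [← T.zero_coh_E1] at h13
  exact ⟨by rw [T.coh_E12_E1]; exact h12, by rw [← T.coh_E_E13, T.coh_E13_E1]; exact h13⟩

theorem coreAt_up_zE3_add12 {e3 : E3} {u : E} (hu : T.UltracoreAt (T.right.bB.π e3) u) :
    T.up.CoreAt e3 (T.back.vA.add (T.zE3 e3) u) := by
  have h13 := T.back.πB_addA_zeroB_core (b := T.right.vB.zero e3) (x := u)
    (by rw [T.coh_E13_E1, T.right.πA_zeroB, ← T.coh_E1_M]; exact hu.coreAt_back)
  have h23 := T.left.πB_addA_zeroB_core (b := T.front.vB.zero e3) (x := u)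
    (by rw [T.coh_E23_E2, T.front.πA_zeroB, ← T.coh_E2_M, ← T.coh_E3_M]; exact hu.coreAt_left)
  rw [← T.coh_E_E13] at h13
  rw [← T.coh_E_E12, ← T.coh_E_E23, ← T.zero_coh_E3] at h23
  exact ⟨by rw [T.coh_E13_E3]; exact h13, by rw [T.coh_E23_E3]; exact h23⟩

theorem add_ultracore_comm_zero13 {e u : E}
    (hu : T.UltracoreAt (T.down.bA.π (T.down.vA.π (T.back.vA.π e))) u) :
    T.back.vA.add (T.up.vA.zero (T.up.vA.π e))
        (T.up.vB.add (T.zE1 (T.down.vA.π (T.back.vA.π e))) u) =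
      T.up.vB.add (T.up.vA.zero (T.up.vA.π e))
        (T.back.vA.add (T.zE3 (T.right.vB.π (T.up.vA.π e))) u) := by
  have h := T.left.addA_zero_addB_eq_addB_zero_addA (d := T.up.vA.zero (T.up.vA.π e)) (x := u)
    (by rw [← T.coh_E_E12, T.π12_zero13, T.coh_E12_E2, T.down.πB_zeroA]; exact hu.coreAt_left)
  rwa [← T.coh_E_E12, ← T.coh_E_E23, T.π12_zero13, T.π23_zero13, ← T.zero_coh_E3] at h

theorem add_ultracore_comm_zero12 {e u : E}
    (hu : T.UltracoreAt (T.down.bA.π (T.down.vA.π (T.back.vA.π e))) u) :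
    T.up.vA.add (T.back.vA.zero (T.back.vA.π e))
        (T.up.vB.add (T.zE1 (T.down.vA.π (T.back.vA.π e))) u) =
      T.up.vB.add (T.back.vA.zero (T.back.vA.π e))
        (T.up.vA.add (T.zE2 (T.down.vB.π (T.back.vA.π e))) u) := by
  have h := T.up.addA_zero_addB_eq_addB_zero_addA (d := T.back.vA.zero (T.back.vA.π e)) (x := u)
    (by rw [T.π13_zero12, T.coh_E13_E3, T.right.πB_zeroA, ← T.coh_E1_M]; exact hu.coreAt_up)
  rwa [T.π13_zero12, T.π23_zero12, ← T.zero_coh_E1, ← T.zero_coh_E2] at h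

theorem add_ultracore_comm_zero23 {e u : E}
    (hu : T.UltracoreAt (T.down.bA.π (T.down.vA.π (T.back.vA.π e))) u) :
    T.up.vA.add (T.up.vB.zero (T.up.vB.π e))
        (T.back.vA.add (T.zE3 (T.right.vB.π (T.up.vA.π e))) u) =
      T.back.vA.add (T.up.vB.zero (T.up.vB.π e))
        (T.up.vA.add (T.zE2 (T.down.vB.π (T.back.vA.π e))) u) := by
  have h := T.back.addA_zero_addB_eq_addB_zero_addA (d := T.up.vB.zero (T.up.vB.π e)) (x := u)
    (by rw [T.coh_E12_E1, T.π12_zero23, T.down.πA_zeroB, ← T.down.proj_compat]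
        exact hu.coreAt_back)
  rw [← T.coh_E_E13, T.π12_zero23, T.π13_zero23] at h
  exact h.symm

theorem sub13_eq_iff_sub12_eq {e e' u : E} (h12 : T.back.vA.π e = T.back.vA.π e')
    (h13 : T.up.vA.π e = T.up.vA.π e')
    (hu : T.UltracoreAt (T.down.bA.π (T.down.vA.π (T.back.vA.π e))) u) :
    T.up.vA.sub e e' = T.back.vA.add (T.up.vA.zero (T.up.vA.π e))
        (T.up.vB.add (T.zE1 (T.down.vA.π (T.back.vA.π e))) u) ↔
      T.back.vA.sub e e' = T.up.vA.add (T.back.vA.zero (T.back.vA.π e))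
        (T.up.vB.add (T.zE1 (T.down.vA.π (T.back.vA.π e))) u) := by
  have h := T.back.subA_eq_iff_subB_eq h12 (by rw [← T.coh_E_E13]; exact h13)
    (by rw [T.coh_E12_E1]; exact coreAt_back_zE1_add23 hu)
  rw [← T.coh_E_E13] at h
  exact h.symm

theorem sub13_eq_iff_sub23_eq {e e' u : E} (h13 : T.up.vA.π e = T.up.vA.π e')
    (h23 : T.up.vB.π e = T.up.vB.π e')
    (hu : T.UltracoreAt (T.down.bA.π (T.down.vA.π (T.back.vA.π e))) u) :
    T.up.vA.sub e e' = T.up.vB.add (T.up.vA.zero (T.up.vA.π e))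
        (T.back.vA.add (T.zE3 (T.right.vB.π (T.up.vA.π e))) u) ↔
      T.up.vB.sub e e' = T.up.vA.add (T.up.vB.zero (T.up.vB.π e))
        (T.back.vA.add (T.zE3 (T.right.vB.π (T.up.vA.π e))) u) :=
  T.up.subA_eq_iff_subB_eq h13 h23
    (by rw [T.coh_E13_E3]; exact coreAt_up_zE3_add12 (by rwa [T.πM_π3_π13]))

theorem exists_ultracore_eq_zE1_add23 {e1 : E1} {w : E} (hw : T.back.CoreAt e1 w)
    (hw23 : T.up.vB.π w = T.front.vA.zero (T.front.bA.zero (T.down.bA.π e1))) :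
    ∃ u, T.UltracoreAt (T.down.bA.π e1) u ∧ w = T.up.vB.add (T.zE1 e1) u := by
  have hz23 : T.up.vB.π (T.zE1 e1) = T.up.vB.π w := by
    rw [zE1, T.π23_zero12, T.down.πB_zeroA, T.coh_E2_M, hw23]
  have hw12 : T.back.vA.π w = T.down.vA.zero e1 := by rw [hw.1, T.coh_E12_E1]
  have hw13 : T.up.vA.π w = T.right.vA.zero e1 := by rw [T.coh_E_E13, hw.2, T.coh_E13_E1]
  refine ⟨T.up.vB.sub w (T.zE1 e1), ⟨?_, ?_, ?_⟩, (T.up.vB.add_sub_cancel hz23).symm⟩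
  · have h := T.left.πA_subB (d := w) (d' := T.zE1 e1) (by rw [← T.coh_E_E23]; exact hz23.symm)
    rw [← T.coh_E_E23, ← T.coh_E_E12, T.coh_E12_E2] at h
    rw [h, hw12, zE1, T.back.vA.π_zero, PreVB.sub_self, T.down.πB_zeroA, T.down.double_zero]
  · have h := T.up.πA_subB (d := w) (d' := T.zE1 e1) hz23.symm
    rw [T.coh_E13_E3] at h
    rw [h, hw13, zE1, T.zero_coh_E1, T.up.vA.π_zero, PreVB.sub_self, T.right.πB_zeroA,
      T.right.double_zero, T.coh_E1_M]
  · rw [T.up.vB.π_sub hz23.symm, hw23]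

theorem exists_ultracore_sub13_eq {e e' : E} (h12 : T.back.vA.π e = T.back.vA.π e')
    (h13 : T.up.vA.π e = T.up.vA.π e') (h23 : T.up.vB.π e = T.up.vB.π e') :
    ∃ u, T.UltracoreAt (T.down.bA.π (T.down.vA.π (T.back.vA.π e))) u ∧
      T.up.vA.sub e e' = T.back.vA.add (T.up.vA.zero (T.up.vA.π e))
        (T.up.vB.add (T.zE1 (T.down.vA.π (T.back.vA.π e))) u) := by
  set d := T.up.vA.sub e e'
  have hd13 : T.up.vA.π d = T.up.vA.π e := T.up.vA.π_sub h13
  have hd12 : T.back.vA.π d = T.down.vA.zero (T.down.vA.π (T.back.vA.π e)) := by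
    have h := T.back.πA_subB (d := e) (d' := e') (by rw [← T.coh_E_E13]; exact h13)
    rwa [← T.coh_E_E13, T.coh_E12_E1, ← h12, PreVB.sub_self] at h
  have hd23 : T.up.vB.π d = T.up.vB.π (T.up.vA.zero (T.up.vA.π e)) := by
    rw [T.up.πB_subA h13, ← h23, PreVB.sub_self, T.π23_zero13, T.coh_E23_E3, T.π3_π23]
  have hdz12 : T.back.vA.π d = T.back.vA.π (T.up.vA.zero (T.up.vA.π e)) := by
    rw [hd12, T.π12_zero13]
  set w := T.back.vA.sub d (T.up.vA.zero (T.up.vA.π e))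
  have hw : T.back.CoreAt (T.down.vA.π (T.back.vA.π e)) w := by
    have h := T.back.coreAt_subA_zeroB (d := d) (by rw [T.coh_E12_E1]; exact hd12)
    rwa [← T.coh_E_E13, hd13] at h
  have hw23 : T.up.vB.π w =
      T.front.vA.zero (T.front.bA.zero (T.down.bA.π (T.down.vA.π (T.back.vA.π e)))) := by
    have h := T.left.πB_subA (d := d) (d' := T.up.vA.zero (T.up.vA.π e))
      (by rw [← T.coh_E_E12]; exact hdz12)
    rw [← T.coh_E_E12, ← T.coh_E_E23, T.coh_E23_E2] at h
    rw [h, hd23, PreVB.sub_self, T.π23_zero13, T.front.πA_zeroB, ← T.coh_E3_M, T.πM_π3_π13]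
  obtain ⟨u, hu, hwu⟩ := exists_ultracore_eq_zE1_add23 hw hw23
  exact ⟨u, hu, by rw [← hwu, T.back.vA.add_sub_cancel hdz12.symm]⟩

theorem add_zero13_zE1_add23_injective {e u u' : E}
    (hu : T.UltracoreAt (T.down.bA.π (T.down.vA.π (T.back.vA.π e))) u)
    (hu' : T.UltracoreAt (T.down.bA.π (T.down.vA.π (T.back.vA.π e))) u')
    (h : T.back.vA.add (T.up.vA.zero (T.up.vA.π e))
        (T.up.vB.add (T.zE1 (T.down.vA.π (T.back.vA.π e))) u) =
      T.back.vA.add (T.up.vA.zero (T.up.vA.π e))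
        (T.up.vB.add (T.zE1 (T.down.vA.π (T.back.vA.π e))) u')) : u = u' :=
  T.left.addA_zero_addB_core_injective hu.coreAt_left_zero13 hu'.coreAt_left_zero13
    (by rw [← T.coh_E_E12, ← T.coh_E_E23, T.π12_zero13]; exact h)

end TVB

/-- If `e, e'` in a triple vector bundle have exactly the same
outline, then there is a unique ultracore element `u` such that all six
formulas of Proposition 3.1 (`Prop.~sameoutline`) hold, e.g.
`e -_{1,3} e' = 0̂_{e_{1,3}} +_{1,2} (0̂_{e_1} +_{2,3} u)
            = 0̂_{e_{1,3}} +_{2,3} (0̂_{e_3} +_{1,2} u)`, etc. -/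
theorem tvb_same_outline_difference {E E12 E13 E23 E1 E2 E3 M : Type*}
    (T : TVB E E12 E13 E23 E1 E2 E3 M) (e e' : E)
    (h12 : T.back.vA.π e = T.back.vA.π e')
    (h13 : T.up.vA.π e = T.up.vA.π e')
    (h23 : T.up.vB.π e = T.up.vB.π e') :
    ∃! u : E,
      T.UltracoreAt (T.down.bA.π (T.down.vA.π (T.back.vA.π e))) u ∧
      -- e -_{1,3} e'
      (T.up.vA.sub e e' =
        T.back.vA.add (T.up.vA.zero (T.up.vA.π e))
          (T.up.vB.add (T.zE1 (T.down.vA.π (T.back.vA.π e))) u)) ∧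
      (T.up.vA.sub e e' =
        T.up.vB.add (T.up.vA.zero (T.up.vA.π e))
          (T.back.vA.add (T.zE3 (T.right.vB.π (T.up.vA.π e))) u)) ∧
      -- e -_{1,2} e'
      (T.back.vA.sub e e' =
        T.up.vA.add (T.back.vA.zero (T.back.vA.π e))
          (T.up.vB.add (T.zE1 (T.down.vA.π (T.back.vA.π e))) u)) ∧
      (T.back.vA.sub e e' =
        T.up.vB.add (T.back.vA.zero (T.back.vA.π e))
          (T.up.vA.add (T.zE2 (T.down.vB.π (T.back.vA.π e))) u)) ∧
      -- e -_{2,3} e'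
      (T.up.vB.sub e e' =
        T.up.vA.add (T.up.vB.zero (T.up.vB.π e))
          (T.back.vA.add (T.zE3 (T.right.vB.π (T.up.vA.π e))) u)) ∧
      (T.up.vB.sub e e' =
        T.back.vA.add (T.up.vB.zero (T.up.vB.π e))
          (T.up.vA.add (T.zE2 (T.down.vB.π (T.back.vA.π e))) u)) := by
  obtain ⟨u, hu, sub13_eq⟩ := TVB.exists_ultracore_sub13_eq h12 h13 h23
  have sub13_eq' := sub13_eq.trans (TVB.add_ultracore_comm_zero13 hu)
  have sub12_eq := (TVB.sub13_eq_iff_sub12_eq h12 h13 hu).mp sub13_eq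
  have sub23_eq := (TVB.sub13_eq_iff_sub23_eq h13 h23 hu).mp sub13_eq'
  refine ⟨u, ⟨hu, sub13_eq, sub13_eq', sub12_eq,
    sub12_eq.trans (TVB.add_ultracore_comm_zero12 hu), sub23_eq,
    sub23_eq.trans (TVB.add_ultracore_comm_zero23 hu)⟩, ?_⟩
  rintro u' ⟨hu', sub13_eq_u', -⟩
  exact (TVB.add_zero13_zE1_add23_injective hu hu' (sub13_eq.symm.trans sub13_eq_u')).symm
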